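/- Let A be an n×n real positive definite matrix and let 1 < p < n. Let J be a uniformly random subset of {1,…,n} of size p with column selector S = S_J. Then E[P_{A^{1/2}S}] ⪰ (p/n) · ( ((p−1)/(n−1)) I_n + (1 − (p−1)/(n−1)) A^{−1/2} diag(A) A^{−1/2} )⁻¹ in the positive semidefinite order, where diag(A) is the diagonal matrix containing the diagonal entries of A. -/

import Mathlib

open scoped BigOperators Matrix

noncomputable section

/-- `B` is the Moore–Penrose pseudoinverse of `A`. -/
def IsMoorePenrose {m n : ℕ} (A : Matrix (Fin m) (Fin n) ℝ) (B : Matrix (Fin n) (Fin m) ℝ) : Prop :=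
  A * B * A = A ∧ B * A * B = B ∧ (A * B)ᵀ = A * B ∧ (B * A)ᵀ = B * A

open Classical in
/-- The Moore–Penrose pseudoinverse (it always exists and is unique). -/
def pinv {m n : ℕ} (A : Matrix (Fin m) (Fin n) ℝ) : Matrix (Fin n) (Fin m) ℝ :=
  if h : ∃ B, IsMoorePenrose A B then h.choose else 0

/-- The orthogonal projector `P_M = M(MᵀM)†Mᵀ` onto the column space of `M`. -/
def proj {m n : ℕ} (M : Matrix (Fin m) (Fin n) ℝ) : Matrix (Fin m) (Fin m) ℝ :=
  M * pinv (Mᵀ * M) * Mᵀ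

/-- The column selector matrix of an index set `J` of size `p`. -/
def selector {n : ℕ} (p : ℕ) (J : Finset (Fin n)) : Matrix (Fin n) (Fin p) ℝ :=
  if h : J.card = p then
    Matrix.of fun i j => if i = ((J.orderIsoOfFin h j : { x // x ∈ J }) : Fin n) then (1 : ℝ) else 0
  else 0

/-- The square root of a positive semidefinite matrix, as the former `Matrix.PosSemidef.sqrt`. -/
def Matrix.PosSemidef.sqrt {n : ℕ} {A : Matrix (Fin n) (Fin n) ℝ} (hA : A.PosSemidef) :
    Matrix (Fin n) (Fin n) ℝ :=
  hA.isHermitian.eigenvectorUnitary.1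
    * Matrix.diagonal (fun i => Real.sqrt (hA.isHermitian.eigenvalues i))
    * (star hA.isHermitian.eigenvectorUnitary : Matrix (Fin n) (Fin n) ℝ)

/-!
For any matrix `W`, `(P_M - M W)ᵀ (P_M - M W) ⪰ 0` expands, since `P_M` is a symmetric idempotent
fixing the columns of `M`, to `P_M ⪰ M W + (M W)ᵀ - Wᵀ (Mᵀ M) W`. Take `M = A^{1/2} S_J` and
`W = S_Jᵀ A^{-1/2} C⁻¹`, where `C` is the matrix inverted on the right-hand side. The right-hand
side is then affine in `S_J S_Jᵀ` and `S_J S_Jᵀ A S_J S_Jᵀ`, whose averages over `J` are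
`(p/n) I` and `(p/n) ((p-1)/(n-1) A + (1 - (p-1)/(n-1)) diag(A))`; both averaged terms
become `(p/n) C⁻¹`, and the bound reads `E[P] ⪰ (p/n) C⁻¹`.
-/

open Matrix Finset

-- With the convention `0⁻¹ = 0`, `x ↦ x⁻¹` is the scalar pseudoinverse, so the four
-- Penrose identities hold pointwise on the spectrum.
theorem isMoorePenrose_cfc_inv {k : ℕ} {G : Matrix (Fin k) (Fin k) ℝ} (hG : G.IsHermitian) :
    IsMoorePenrose G (cfc (·⁻¹ : ℝ → ℝ) G) := by
  have hmul (f g : ℝ → ℝ) : cfc f G * cfc g G = cfc (fun x => f x * g x) G :=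
    (cfc_mul f g G (G.finite_real_spectrum.continuousOn f)
      (G.finite_real_spectrum.continuousOn g)).symm
  have hsymm (f : ℝ → ℝ) : (cfc f G)ᵀ = cfc f G := by
    rw [← conjTranspose_eq_transpose_of_trivial]
    exact cfc_predicate f G
  have h : IsMoorePenrose (cfc (fun x : ℝ => x) G) (cfc (·⁻¹ : ℝ → ℝ) G) := by
    have hinv (x : ℝ) : x⁻¹ * x * x⁻¹ = x⁻¹ := by simpa using mul_inv_mul_cancel x⁻¹
    simp only [IsMoorePenrose, hmul, hsymm, mul_inv_mul_cancel, hinv, and_self]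
  rwa [cfc_id' ℝ G] at h

theorem isMoorePenrose_pinv_of_isHermitian {k : ℕ} {G : Matrix (Fin k) (Fin k) ℝ}
    (hG : G.IsHermitian) : IsMoorePenrose G (pinv G) := by
  have h : ∃ B, IsMoorePenrose G B := ⟨_, isMoorePenrose_cfc_inv hG⟩
  rw [pinv, dif_pos h]
  exact h.choose_spec

section Projector

variable {m k : ℕ} (M : Matrix (Fin m) (Fin k) ℝ)

theorem gram_mul_transpose_mul_gram {B : Matrix (Fin k) (Fin k) ℝ}
    (hB : Mᵀ * M * B * (Mᵀ * M) = Mᵀ * M) : Mᵀ * M * Bᵀ * (Mᵀ * M) = Mᵀ * M := by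
  simpa [transpose_mul, Matrix.mul_assoc] using congrArg transpose hB

theorem mul_mul_gram_eq_self {B : Matrix (Fin k) (Fin k) ℝ}
    (hB : Mᵀ * M * B * (Mᵀ * M) = Mᵀ * M) : M * B * (Mᵀ * M) = M := by
  have hBt := gram_mul_transpose_mul_gram M hB
  have hzero : (M * B * (Mᵀ * M) - M)ᴴ * (M * B * (Mᵀ * M) - M) = 0 := by
    simp only [conjTranspose_eq_transpose_of_trivial, transpose_sub, transpose_mul,
      transpose_transpose, Matrix.sub_mul, Matrix.mul_sub]
    simp only [← Matrix.mul_assoc] at hB hBt ⊢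
    rw [hBt, hB, sub_self]
  exact sub_eq_zero.mp (conjTranspose_mul_self_eq_zero.mp hzero)

theorem gram_mul_pinv_mul_gram : Mᵀ * M * pinv (Mᵀ * M) * (Mᵀ * M) = Mᵀ * M :=
  (isMoorePenrose_pinv_of_isHermitian (by simpa using isHermitian_conjTranspose_mul_self M)).1

theorem proj_mul_self : proj M * M = M := by
  rw [proj, Matrix.mul_assoc _ Mᵀ M]
  exact mul_mul_gram_eq_self M (gram_mul_pinv_mul_gram M)

theorem transpose_proj : (proj M)ᵀ = proj M := by
  have h := gram_mul_pinv_mul_gram M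
  have hMt : Mᵀ * M * (pinv (Mᵀ * M))ᵀ * Mᵀ = Mᵀ := by
    simpa [transpose_mul, Matrix.mul_assoc] using congrArg transpose (mul_mul_gram_eq_self M h)
  calc (proj M)ᵀ = M * (pinv (Mᵀ * M))ᵀ * Mᵀ := by
        simp [proj, transpose_mul, Matrix.mul_assoc]
    _ = M * pinv (Mᵀ * M) * (Mᵀ * M * (pinv (Mᵀ * M))ᵀ * Mᵀ) := by
        rw [← Matrix.mul_assoc (M * _), ← Matrix.mul_assoc (M * _), mul_mul_gram_eq_self M h]
    _ = proj M := by rw [hMt, proj]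

theorem proj_mul_proj : proj M * proj M = proj M := by
  calc proj M * proj M = M * pinv (Mᵀ * M) * (Mᵀ * M) * pinv (Mᵀ * M) * Mᵀ := by
        simp only [proj, Matrix.mul_assoc]
    _ = proj M := by rw [mul_mul_gram_eq_self M (gram_mul_pinv_mul_gram M), proj]

theorem transpose_mul_proj : Mᵀ * proj M = Mᵀ := by
  conv_lhs => rw [← transpose_proj M, ← transpose_mul, proj_mul_self]

theorem posSemidef_proj_sub (W : Matrix (Fin k) (Fin m) ℝ) :
    (proj M - (M * W + (M * W)ᵀ - Wᵀ * (Mᵀ * M) * W)).PosSemidef := by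
  have hsq : (proj M - M * W)ᴴ * (proj M - M * W)
      = proj M - (M * W + (M * W)ᵀ - Wᵀ * (Mᵀ * M) * W) := by
    rw [conjTranspose_eq_transpose_of_trivial, transpose_sub, transpose_proj, Matrix.sub_mul,
      Matrix.mul_sub, Matrix.mul_sub, proj_mul_proj, ← Matrix.mul_assoc, proj_mul_self,
      transpose_mul, Matrix.mul_assoc Wᵀ, transpose_mul_proj]
    simp only [Matrix.mul_assoc]
    abel
  exact hsq ▸ posSemidef_conjTranspose_mul_self _

end Projector

theorem posSemidef_sum_proj_sub {m k : ℕ} {ι : Type*} (s : Finset ι)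
    (M : ι → Matrix (Fin m) (Fin k) ℝ) (W : ι → Matrix (Fin k) (Fin m) ℝ)
    {T : Matrix (Fin m) (Fin m) ℝ} (hT : Tᵀ = T) (hMW : ∑ i ∈ s, M i * W i = T)
    (hWMMW : ∑ i ∈ s, (W i)ᵀ * ((M i)ᵀ * M i) * W i = T) :
    (∑ i ∈ s, proj (M i) - T).PosSemidef := by
  have h := posSemidef_sum s fun i _ => posSemidef_proj_sub (M i) (W i)
  rwa [Finset.sum_sub_distrib, Finset.sum_sub_distrib, Finset.sum_add_distrib, ← transpose_sum,
    hMW, hWMMW, hT, add_sub_cancel_right] at h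

section Counting

variable {ι R : Type*} [Fintype ι] [DecidableEq ι]

theorem card_powersetCard_filter_superset (p : ℕ) (t : Finset ι) (htp : #t ≤ p) :
    #{J ∈ powersetCard p (univ : Finset ι) | t ⊆ J} = (Fintype.card ι - #t).choose (p - #t) := by
  rw [← card_compl, ← card_powersetCard]
  refine card_nbij' (· \ t) (· ∪ t) ?_ ?_ ?_ ?_
  · intro J hJ
    simp only [coe_filter, mem_powersetCard, subset_univ, true_and] at hJ
    simp [card_sdiff_of_subset hJ.2, hJ.1]
  · intro K hK
    simp only [mem_coe, mem_powersetCard] at hK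
    simp only [coe_filter, mem_powersetCard, subset_univ, true_and, Set.mem_ofPred_eq]
    rw [card_union_of_disjoint (disjoint_of_subset_left hK.1 disjoint_compl_left), hK.2]
    exact ⟨Nat.sub_add_cancel htp, subset_union_right⟩
  · intro J hJ
    simp only [coe_filter, mem_powersetCard, subset_univ, true_and, Set.mem_ofPred_eq] at hJ
    exact sdiff_union_of_subset hJ.2
  · intro K hK
    simp only [mem_coe, mem_powersetCard] at hK
    exact union_sdiff_cancel_right (disjoint_of_subset_left hK.1 disjoint_compl_left)

theorem card_filter_mem_powersetCard {p : ℕ} (hp : 1 ≤ p) (i : ι) :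
    #{J ∈ powersetCard p (univ : Finset ι) | i ∈ J} = (Fintype.card ι - 1).choose (p - 1) := by
  simpa using card_powersetCard_filter_superset p {i} (by simpa using hp)

theorem card_filter_mem_and_mem_powersetCard {p : ℕ} (hp : 2 ≤ p) (i k : ι) :
    #{J ∈ powersetCard p (univ : Finset ι) | i ∈ J ∧ k ∈ J}
      = if i = k then (Fintype.card ι - 1).choose (p - 1)
        else (Fintype.card ι - 2).choose (p - 2) := by
  split_ifs with hik
  · subst hik
    simpa using card_filter_mem_powersetCard (by omega) i
  · have h : ∀ J : Finset ι, (i ∈ J ∧ k ∈ J ↔ {i, k} ⊆ J) := by simp [insert_subset_iff]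
    simpa [h, card_pair hik] using
      card_powersetCard_filter_superset p {i, k} (by rw [card_pair hik]; exact hp)

theorem sum_diagonal_indicator_powersetCard [Semiring R] {p : ℕ} (hp : 1 ≤ p) :
    ∑ J ∈ powersetCard p (univ : Finset ι), diagonal ((J : Set ι).indicator (1 : ι → R))
      = ((Fintype.card ι - 1).choose (p - 1) : R) • 1 := by
  ext i k
  by_cases hik : i = k
  · subst hik
    simp [Matrix.sum_apply, Set.indicator_apply, ← card_filter_mem_powersetCard hp i]
  · simp [Matrix.sum_apply, hik]

theorem sum_diagonal_indicator_mul_mul [Semiring R] (s : Finset (Finset ι)) (A : Matrix ι ι R) :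
    ∑ J ∈ s, diagonal ((J : Set ι).indicator 1) * A * diagonal ((J : Set ι).indicator 1)
      = Matrix.of fun i k => #{J ∈ s | i ∈ J ∧ k ∈ J} • A i k := by
  ext i k
  simp only [Matrix.sum_apply, mul_diagonal, diagonal_mul, Set.indicator_apply, mem_coe,
    Pi.one_apply, of_apply, card_filter, sum_smul]
  refine sum_congr rfl fun J _ => ?_
  by_cases hi : i ∈ J <;> by_cases hk : k ∈ J <;> simp [hi, hk]

theorem sum_diagonal_indicator_mul_mul_powersetCard [Ring R] {p : ℕ} (hp : 2 ≤ p)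
    (A : Matrix ι ι R) :
    ∑ J ∈ powersetCard p (univ : Finset ι),
        diagonal ((J : Set ι).indicator 1) * A * diagonal ((J : Set ι).indicator 1)
      = ((Fintype.card ι - 2).choose (p - 2) : R) • A
        + (((Fintype.card ι - 1).choose (p - 1) : R) - (Fintype.card ι - 2).choose (p - 2))
          • diagonal A.diag := by
  rw [sum_diagonal_indicator_mul_mul]
  ext i k
  simp only [card_filter_mem_and_mem_powersetCard hp, of_apply, Matrix.add_apply,
    Matrix.smul_apply]
  split_ifs with hik
  · subst hik
    simp [← Nat.cast_smul_eq_nsmul R, ← add_mul]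
  · simp [diagonal_apply_ne _ hik, ← Nat.cast_smul_eq_nsmul R]

end Counting

section Selector

variable {n p : ℕ}

theorem selector_mul_transpose {J : Finset (Fin n)} (hJ : #J = p) :
    selector p J * (selector p J)ᵀ = diagonal ((J : Set (Fin n)).indicator 1) := by
  ext i k
  have hsum : ∑ j : Fin p, (if i = (J.orderIsoOfFin hJ j : Fin n) then (1 : ℝ) else 0)
        * (if k = (J.orderIsoOfFin hJ j : Fin n) then 1 else 0)
      = ∑ x ∈ J, (if i = x then (1 : ℝ) else 0) * (if k = x then 1 else 0) := by
    rw [← sum_coe_sort J]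
    exact Fintype.sum_equiv (J.orderIsoOfFin hJ).toEquiv _ _ fun _ => rfl
  simp only [selector, dif_pos hJ, mul_apply, transpose_apply, of_apply]
  rw [hsum]
  by_cases hik : i = k
  · simp [hik, Set.indicator_apply]
  · simp [hik]

theorem sum_selector_mul_transpose (hp : 1 ≤ p) :
    ∑ J ∈ powersetCard p (univ : Finset (Fin n)), selector p J * (selector p J)ᵀ
      = ((n - 1).choose (p - 1) : ℝ) • 1 := by
  rw [sum_congr rfl fun J hJ => selector_mul_transpose (mem_powersetCard.mp hJ).2,
    sum_diagonal_indicator_powersetCard hp, Fintype.card_fin]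

theorem sum_selector_mul_transpose_mul_mul (hp : 2 ≤ p) (A : Matrix (Fin n) (Fin n) ℝ) :
    ∑ J ∈ powersetCard p (univ : Finset (Fin n)),
        selector p J * (selector p J)ᵀ * A * (selector p J * (selector p J)ᵀ)
      = ((n - 2).choose (p - 2) : ℝ) • A
        + (((n - 1).choose (p - 1) : ℝ) - (n - 2).choose (p - 2)) • diagonal A.diag := by
  rw [sum_congr rfl fun J hJ => by rw [selector_mul_transpose (mem_powersetCard.mp hJ).2],
    sum_diagonal_indicator_mul_mul_powersetCard hp, Fintype.card_fin]

end Selector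

section Sqrt

open scoped MatrixOrder

variable {n : ℕ} {A : Matrix (Fin n) (Fin n) ℝ}

theorem Matrix.PosSemidef.sqrt_eq_cfcSqrt (hA : A.PosSemidef) : hA.sqrt = CFC.sqrt A := by
  rw [CFC.sqrt_eq_real_sqrt A hA.nonneg, cfcₙ_eq_cfc, hA.isHermitian.cfc_eq, IsHermitian.cfc,
    Unitary.conjStarAlgAut_apply, Matrix.PosSemidef.sqrt]
  rfl

theorem Matrix.PosSemidef.sqrt_mul_sqrt (hA : A.PosSemidef) : hA.sqrt * hA.sqrt = A := by
  rw [hA.sqrt_eq_cfcSqrt, CFC.sqrt_mul_sqrt_self A hA.nonneg]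

theorem Matrix.PosSemidef.transpose_sqrt (hA : A.PosSemidef) : hA.sqrtᵀ = hA.sqrt := by
  rw [hA.sqrt_eq_cfcSqrt, ← conjTranspose_eq_transpose_of_trivial]
  exact (CFC.sqrt_nonneg A).isSelfAdjoint

theorem Matrix.PosDef.isUnit_det_sqrt (hA : A.PosDef) : IsUnit hA.posSemidef.sqrt.det := by
  have h : hA.posSemidef.sqrt.det * hA.posSemidef.sqrt.det = A.det := by
    rw [← det_mul, hA.posSemidef.sqrt_mul_sqrt]
  exact isUnit_of_mul_isUnit_left (h ▸ hA.det_pos.ne'.isUnit)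

theorem Matrix.PosDef.posDef_smul_one_add_smul_sqrt_inv_mul_diagonal_mul (hA : A.PosDef) {c : ℝ}
    (hc0 : 0 < c) (hc1 : c ≤ 1) :
    (c • (1 : Matrix (Fin n) (Fin n) ℝ) + (1 - c) •
      ((hA.posSemidef.sqrt)⁻¹ * diagonal A.diag * (hA.posSemidef.sqrt)⁻¹)).PosDef := by
  have hD := (PosDef.diagonal fun i => hA.diag_pos (i := i)).posSemidef.conjTranspose_mul_mul_same
    (hA.posSemidef.sqrt)⁻¹
  rw [conjTranspose_eq_transpose_of_trivial, transpose_nonsing_inv,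
    hA.posSemidef.transpose_sqrt] at hD
  exact (PosDef.one.smul hc0).add_posSemidef (hD.smul (sub_nonneg.mpr hc1))

end Sqrt

theorem mul_choose_sub_one_sub_one {m k : ℕ} (hk : 0 < k) :
    m * (m - 1).choose (k - 1) = m.choose k * k := by
  obtain ⟨k, rfl⟩ := Nat.exists_eq_add_of_lt hk
  cases m with
  | zero => simp
  | succ m => simpa using Nat.add_one_mul_choose_eq m k

theorem cast_choose_sub_one_sub_one_div {m k : ℕ} (hk : 0 < k) (hkm : k ≤ m) :
    ((m - 1).choose (k - 1) : ℝ) / m.choose k = k / m := by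
  have h : (m : ℝ) * (m - 1).choose (k - 1) = m.choose k * k := by
    exact_mod_cast mul_choose_sub_one_sub_one hk
  have hm : (m : ℝ) ≠ 0 := by exact_mod_cast (hk.trans_le hkm).ne'
  have hchoose : (m.choose k : ℝ) ≠ 0 := by exact_mod_cast (Nat.choose_pos hkm).ne'
  field_simp
  linarith

theorem cast_choose_sub_two_sub_two_div {m k : ℕ} (hk : 2 ≤ k) (hkm : k ≤ m) :
    ((m - 2).choose (k - 2) : ℝ) / (m - 1).choose (k - 1) = (k - 1) / (m - 1) := by
  have h := cast_choose_sub_one_sub_one_div (m := m - 1) (k := k - 1) (by omega) (by omega)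
  rwa [Nat.sub_sub, Nat.sub_sub, Nat.cast_sub (by omega), Nat.cast_sub (by omega),
    Nat.cast_one] at h

section Average

variable {n p : ℕ} {A B : Matrix (Fin n) (Fin n) ℝ}

theorem sum_mul_selector_mul_transpose_selector_mul (hp : 1 ≤ p) (hB : IsUnit B.det)
    (K : Matrix (Fin n) (Fin n) ℝ) :
    ∑ J ∈ powersetCard p (univ : Finset (Fin n)), B * selector p J * ((selector p J)ᵀ * B⁻¹ * K)
      = ((n - 1).choose (p - 1) : ℝ) • K := by
  calc ∑ J ∈ powersetCard p (univ : Finset (Fin n)), B * selector p J * ((selector p J)ᵀ * B⁻¹ * K)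
      = B * (∑ J ∈ powersetCard p (univ : Finset (Fin n)), selector p J * (selector p J)ᵀ)
          * (B⁻¹ * K) := by
        simp only [mul_sum, sum_mul, Matrix.mul_assoc]
    _ = ((n - 1).choose (p - 1) : ℝ) • K := by
        rw [sum_selector_mul_transpose hp, Matrix.mul_smul, Matrix.mul_one, Matrix.smul_mul,
          ← Matrix.mul_assoc, mul_nonsing_inv B hB, Matrix.one_mul]

theorem sum_transpose_mul_gram_selector_mul (hp : 2 ≤ p) (hBt : Bᵀ = B) (hBB : B * B = A)
    {K : Matrix (Fin n) (Fin n) ℝ} (hKt : Kᵀ = K) :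
    ∑ J ∈ powersetCard p (univ : Finset (Fin n)), ((selector p J)ᵀ * B⁻¹ * K)ᵀ
        * ((B * selector p J)ᵀ * (B * selector p J)) * ((selector p J)ᵀ * B⁻¹ * K)
      = K * (((n - 2).choose (p - 2) : ℝ) • (B⁻¹ * A * B⁻¹)
          + (((n - 1).choose (p - 1) : ℝ) - (n - 2).choose (p - 2))
            • (B⁻¹ * diagonal A.diag * B⁻¹)) * K := by
  calc ∑ J ∈ powersetCard p (univ : Finset (Fin n)), ((selector p J)ᵀ * B⁻¹ * K)ᵀ
        * ((B * selector p J)ᵀ * (B * selector p J)) * ((selector p J)ᵀ * B⁻¹ * K)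
      = K * B⁻¹ * (∑ J ∈ powersetCard p (univ : Finset (Fin n)),
          selector p J * (selector p J)ᵀ * A * (selector p J * (selector p J)ᵀ)) * (B⁻¹ * K) := by
        rw [mul_sum, sum_mul, ← hBB]
        refine sum_congr rfl fun J _ => ?_
        simp only [transpose_mul, transpose_transpose, transpose_nonsing_inv, hBt, hKt,
          Matrix.mul_assoc]
    _ = _ := by
        rw [sum_selector_mul_transpose_mul_mul hp]
        simp only [Matrix.mul_add, Matrix.add_mul, Matrix.mul_smul, Matrix.smul_mul,
          Matrix.mul_assoc]

theorem posSemidef_sum_proj_mul_selector_sub (hp : 2 ≤ p) (hBt : Bᵀ = B) (hBB : B * B = A)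
    (hB : IsUnit B.det) {C : Matrix (Fin n) (Fin n) ℝ} (hCt : Cᵀ = C) (hC : IsUnit C.det)
    (hAC : ((n - 2).choose (p - 2) : ℝ) • 1
        + (((n - 1).choose (p - 1) : ℝ) - (n - 2).choose (p - 2)) • (B⁻¹ * diagonal A.diag * B⁻¹)
      = ((n - 1).choose (p - 1) : ℝ) • C) :
    (∑ J ∈ powersetCard p (univ : Finset (Fin n)), proj (B * selector p J)
      - ((n - 1).choose (p - 1) : ℝ) • C⁻¹).PosSemidef := by
  have hBAB : B⁻¹ * A * B⁻¹ = 1 := by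
    rw [← hBB, Matrix.mul_assoc, Matrix.mul_assoc, mul_nonsing_inv B hB, Matrix.mul_one,
      nonsing_inv_mul B hB]
  have hCinvt : (C⁻¹)ᵀ = C⁻¹ := by rw [transpose_nonsing_inv, hCt]
  refine posSemidef_sum_proj_sub _ _ (fun J => (selector p J)ᵀ * B⁻¹ * C⁻¹)
    (by rw [transpose_smul, hCinvt]) (sum_mul_selector_mul_transpose_selector_mul (by omega) hB _)
    ?_
  rw [sum_transpose_mul_gram_selector_mul hp hBt hBB hCinvt, hBAB, hAC, Matrix.mul_smul,
    Matrix.smul_mul, nonsing_inv_mul C hC, Matrix.one_mul]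

end Average

/-- For `A` positive definite, `1 < p < n`, and `J` a uniformly random
size-`p` subset of `{1,…,n}` with column selector `S = S_J`,
`E[P_{A^{1/2}S}] ⪰ (p/n)·(((p−1)/(n−1))·I + (1 − (p−1)/(n−1))·A^{−1/2} diag(A) A^{−1/2})⁻¹`. -/
theorem stmt15 (n p : ℕ) (hp : 1 < p) (hpn : p < n)
    (A : Matrix (Fin n) (Fin n) ℝ) (hA : A.PosDef) :
    (((n.choose p : ℝ))⁻¹ • (∑ J ∈ Finset.powersetCard p Finset.univ,
        proj ((Matrix.PosSemidef.sqrt hA.posSemidef) * selector p J))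
      - ((p : ℝ) / n) • ((((p : ℝ) - 1) / ((n : ℝ) - 1)) • (1 : Matrix (Fin n) (Fin n) ℝ)
          + (1 - ((p : ℝ) - 1) / ((n : ℝ) - 1))
              • ((Matrix.PosSemidef.sqrt hA.posSemidef)⁻¹ * Matrix.diagonal A.diag * (Matrix.PosSemidef.sqrt hA.posSemidef)⁻¹))⁻¹).PosSemidef := by
  set B := hA.posSemidef.sqrt
  set c : ℝ := ((p : ℝ) - 1) / ((n : ℝ) - 1)
  set C := c • (1 : Matrix (Fin n) (Fin n) ℝ) + (1 - c) • (B⁻¹ * diagonal A.diag * B⁻¹) with hC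
  have hc : ((n - 2).choose (p - 2) : ℝ) / (n - 1).choose (p - 1) = c :=
    cast_choose_sub_two_sub_two_div hp hpn.le
  have hpR : (1 : ℝ) < p := by exact_mod_cast hp
  have hpnR : (p : ℝ) < n := by exact_mod_cast hpn
  have hc0 : 0 < c := div_pos (by linarith) (by linarith)
  have hc1 : c ≤ 1 := div_le_one_of_le₀ (by linarith) (by linarith)
  have hCpos : C.PosDef := hA.posDef_smul_one_add_smul_sqrt_inv_mul_diagonal_mul hc0 hc1
  have hCt : Cᵀ = C := (conjTranspose_eq_transpose_of_trivial C).symm.trans hCpos.isHermitian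
  have hAC : ((n - 2).choose (p - 2) : ℝ) • 1
        + (((n - 1).choose (p - 1) : ℝ) - (n - 2).choose (p - 2)) • (B⁻¹ * diagonal A.diag * B⁻¹)
      = ((n - 1).choose (p - 1) : ℝ) • C := by
    have hN : ((n - 1).choose (p - 1) : ℝ) ≠ 0 := by exact_mod_cast (Nat.choose_pos (by omega)).ne'
    rw [hC, ← hc, smul_add, smul_smul, smul_smul, mul_div_cancel₀ _ hN, mul_sub, mul_one,
      mul_div_cancel₀ _ hN]
  have hsum := posSemidef_sum_proj_mul_selector_sub (by omega) hA.posSemidef.transpose_sqrt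
    hA.posSemidef.sqrt_mul_sqrt hA.isUnit_det_sqrt hCt hCpos.det_pos.ne'.isUnit hAC
  convert hsum.smul (inv_nonneg.mpr (n.choose p).cast_nonneg : (0 : ℝ) ≤ (n.choose p : ℝ)⁻¹)
    using 1
  rw [smul_sub, smul_smul, inv_mul_eq_div, cast_choose_sub_one_sub_one_div (by omega) hpn.le]
  rfl
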